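/- Let B be a von Neumann subalgebra of a finite von Neumann algebra M and let v ∈ GN⁽¹⁾_M(B) be an intertwiner. (1) v*e_Bv is a projection in (B' ∩ ⟨M,e_B⟩)v*v, i.e., v*e_Bv is a projection commuting with v*vBv*v and dominated by v*v. (2) If q ∈ B is a projection, then v*e_Bv lies in (B' ∩ ⟨M,e_B⟩)q if and only if v*v ∈ Z(B)q = Z(qBq). -/

import Mathlib

/-!
Since `e_B` is the projection onto `[B ξ]`, it commutes with `B`, in particular with `v v*`
and with `v b v*`; part (1) is then algebra in the star ring. For part (2) the key fact is that
`e_B x = 0` forces `x* ξ = 0`, hence `x = 0`, for `x ∈ M`. If `v* e_B v = T q` with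
`T ∈ B' ∩ ⟨M, e_B⟩`, multiplying by `v` on the left turns this into identities `e_B x = e_B y`
in `M`, which give `v q = v` and `q b v*v = v*v b v*v` for `b ∈ B`; the projection `z` onto
`[B B' v*v H]` then lies in `Z(B)` and satisfies `v*v = z q`. Conversely, if `v*v = z q`, the
projection `T` onto `[B ⟨M, e_B⟩' v* e_B v H]` lies in `B' ∩ ⟨M, e_B⟩` and satisfies
`v* e_B v = T v*v = (T z) q`.
-/

open scoped ENNReal

noncomputable section

variable {H : Type*} [NormedAddCommGroup H] [InnerProductSpace ℂ H] [CompleteSpace H]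
variable {H' : Type*} [NormedAddCommGroup H'] [InnerProductSpace ℂ H'] [CompleteSpace H']
variable {K : Type*} [NormedAddCommGroup K] [InnerProductSpace ℂ K] [CompleteSpace K]

/-- The vector functional `x ↦ ⟪ξ, x ξ⟫` on bounded operators; when `ξ` is a tracial
cyclic separating unit vector for a von Neumann algebra `M`, this is the faithful normal
trace `τ` on `M`. -/
def trVec (ξ : H) (x : H →L[ℂ] H) : ℂ := inner ℂ ξ (x ξ)

/-- `ξ` is a cyclic, separating, tracial unit vector for `M`.  This encodes: "`M` is a
finite von Neumann algebra with a faithful normal trace `τ = trVec ξ`, `τ(1) = 1`,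
standardly represented on `H = L²(M, τ)`". -/
structure IsTracialStandardForm (M : VonNeumannAlgebra H) (ξ : H) : Prop where
  norm_eq_one : ‖ξ‖ = 1
  cyclic : Dense {y : H | ∃ x ∈ M, x ξ = y}
  separating : ∀ x ∈ M, x ξ = 0 → x = 0
  tracial : ∀ x ∈ M, ∀ y ∈ M, trVec ξ (x * y) = trVec ξ (y * x)

/-- An orthogonal projection, algebraically. -/
def IsProjOp (p : H →L[ℂ] H) : Prop := IsSelfAdjoint p ∧ p * p = p

/-- `v` is an intertwiner of `B` in `M`: a partial isometry `v ∈ M` with `v B v* ⊆ B`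
and `v* v ∈ B`.  The set of such `v` is `GN⁽¹⁾_M(B)`. -/
def IsIntertwiner (B M : VonNeumannAlgebra H) (v : H →L[ℂ] H) : Prop :=
  v ∈ M ∧ v * star v * v = v ∧ (∀ b ∈ B, v * b * star v ∈ B) ∧ star v * v ∈ B

/-- `v` is a groupoid normalizer of `B` in `M`: a partial isometry `v ∈ M` with
`v B v* ⊆ B` and `v* B v ⊆ B`.  The set of such `v` is `GN_M(B)`. -/
def IsGroupoidNormalizer (B M : VonNeumannAlgebra H) (v : H →L[ℂ] H) : Prop :=
  v ∈ M ∧ v * star v * v = v ∧ (∀ b ∈ B, v * b * star v ∈ B) ∧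
    (∀ b ∈ B, star v * b * v ∈ B)

/-- A strictly one-sided intertwiner: the only projection `p ∈ Z(B)v*v` with
`v p ∈ GN_M(B)` is `p = 0`. -/
def IsStrictlyOneSided (B M : VonNeumannAlgebra H) (v : H →L[ℂ] H) : Prop :=
  IsIntertwiner B M v ∧ ∀ z ∈ B, (∀ b ∈ B, z * b = b * z) →
    IsProjOp (z * (star v * v)) →
    IsGroupoidNormalizer B M (v * (z * (star v * v))) → z * (star v * v) = 0

/-- `e` is the Jones projection `e_B`: the orthogonal projection of `H = L²(M)` onto
`L²(B)`, the closure of `B ξ`. -/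
def IsJonesProjection (B : VonNeumannAlgebra H) (ξ : H) (e : H →L[ℂ] H) : Prop :=
  IsSelfAdjoint e ∧ e * e = e ∧
    (∀ y : H, e y ∈ closure {z : H | ∃ b ∈ B, b ξ = z}) ∧
    (∀ z ∈ closure {z : H | ∃ b ∈ B, b ξ = z}, e z = z)

/-- `N = ⟨M, e_B⟩` is the basic construction: the von Neumann algebra generated by `M`
and the Jones projection `e`. -/
def IsBasicConstruction (M : VonNeumannAlgebra H) (e : H →L[ℂ] H)
    (N : VonNeumannAlgebra H) : Prop :=
  (∀ x ∈ M, x ∈ N) ∧ e ∈ N ∧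
    ∀ N' : VonNeumannAlgebra H, (∀ x ∈ M, x ∈ N') → e ∈ N' → ∀ t ∈ N, t ∈ N'

/-- Membership in the relative commutant `B' ∩ N`. -/
def InRelCommutant (B N : VonNeumannAlgebra H) (x : H →L[ℂ] H) : Prop :=
  x ∈ N ∧ ∀ b ∈ B, b * x = x * b

/-- Membership in the center `Z(B' ∩ N)` of the relative commutant. -/
def InCenterRelCommutant (B N : VonNeumannAlgebra H) (z : H →L[ℂ] H) : Prop :=
  InRelCommutant B N z ∧ ∀ x : H →L[ℂ] H, InRelCommutant B N x → z * x = x * z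

/-- `Tr` is the canonical faithful normal semifinite trace on the basic construction
`N = ⟨M, e_B⟩`, determined by `Tr(x e_B y) = τ(x y)` for `x, y ∈ M` (recorded here in the
positive form `Tr(x e_B x*) = τ(x x*)`); normality is recorded by exhibiting `Tr` as a
countable sum of vector states. -/
structure IsCanonicalTrace (M N : VonNeumannAlgebra H) (ξ : H) (e : H →L[ℂ] H)
    (Tr : (H →L[ℂ] H) → ℝ≥0∞) : Prop where
  additive : ∀ s t : H →L[ℂ] H, s.IsPositive → t.IsPositive → Tr (s + t) = Tr s + Tr t
  normal : ∃ η : ℕ → H, ∀ t : H →L[ℂ] H, t.IsPositive →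
      Tr t = ∑' i, ENNReal.ofReal ((inner ℂ (η i) (t (η i)) : ℂ).re)
  tracial : ∀ t ∈ N, Tr (star t * t) = Tr (t * star t)
  faithful : ∀ t ∈ N, t.IsPositive → Tr t = 0 → t = 0
  jones : ∀ x ∈ M, Tr (x * e * star x) = ENNReal.ofReal ((trVec ξ (x * star x)).re)

/-- The von Neumann algebra generated by a set `S` of operators, as a set:
the double commutant of `S ∪ S*`. -/
def vNGen (S : Set (H →L[ℂ] H)) : Set (H →L[ℂ] H) :=
  Set.centralizer (Set.centralizer (S ∪ star '' S))

/-- `Θ` encodes the spatial tensor product: `Θ x y = x ⊗ y` acting on `K = H ⊗₂ H'`. -/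
structure IsTensorEmbedding
    (Θ : (H →L[ℂ] H) → (H' →L[ℂ] H') → (K →L[ℂ] K)) : Prop where
  map_mul : ∀ x x' y y', Θ x y * Θ x' y' = Θ (x * x') (y * y')
  map_star : ∀ x y, star (Θ x y) = Θ (star x) (star y)
  map_one : Θ 1 1 = 1
  map_add_left : ∀ x x' y, Θ (x + x') y = Θ x y + Θ x' y
  map_add_right : ∀ x y y', Θ x (y + y') = Θ x y + Θ x y'
  map_smul_left : ∀ (c : ℂ) x y, Θ (c • x) y = c • Θ x y
  map_smul_right : ∀ (c : ℂ) x y, Θ x (c • y) = c • Θ x y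

section StarRing

variable {R : Type*} [Ring R] [StarRing R]

theorem IsStarProjection.commute_of_mul_mul_eq {e a : R} (he : IsStarProjection e)
    (h : e * a * e = a * e) (h' : e * star a * e = star a * e) : Commute e a := by
  have h'' : e * a * e = e * a := by
    simpa [star_mul, he.isSelfAdjoint.star_eq, mul_assoc] using congr_arg star h'
  exact h''.symm.trans h

variable {v e : R}

theorem star_mul_mul_star_eq_of_mul_star_mul_eq (hv : v * star v * v = v) :
    star v * v * star v = star v := by
  simpa [star_mul, mul_assoc] using congr_arg star hv

theorem mul_star_mul_mul_eq (hv : v * star v * v = v) (hve : Commute e (v * star v)) :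
    v * (star v * e * v) = e * v := by
  calc v * (star v * e * v) = v * star v * e * v := by simp only [mul_assoc]
    _ = e * (v * star v * v) := by rw [← hve.eq, mul_assoc]
    _ = e * v := by rw [hv]

theorem isStarProjection_star_mul_mul (hv : v * star v * v = v) (he : IsStarProjection e)
    (hve : Commute e (v * star v)) : IsStarProjection (star v * e * v) := by
  refine ⟨?_, by simp [IsSelfAdjoint, star_mul, he.isSelfAdjoint.star_eq, mul_assoc]⟩
  calc star v * e * v * (star v * e * v) = star v * e * (v * (star v * e * v)) := by
        simp only [mul_assoc]
    _ = star v * (e * e) * v := by rw [mul_star_mul_mul_eq hv hve]; simp only [mul_assoc]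
    _ = star v * e * v := by rw [he.isIdempotentElem.eq]

theorem star_mul_mul_mul_star_mul (hv : v * star v * v = v) :
    star v * e * v * (star v * v) = star v * e * v := by
  calc star v * e * v * (star v * v) = star v * e * (v * star v * v) := by simp only [mul_assoc]
    _ = star v * e * v := by rw [hv]

theorem star_mul_mul_star_mul_mul (hv : v * star v * v = v) (hve : Commute e (v * star v)) :
    star v * v * (star v * e * v) = star v * e * v := by
  rw [mul_assoc, mul_star_mul_mul_eq hv hve, mul_assoc]

theorem commute_star_mul_mul_of_commute_conj (hv : v * star v * v = v) {b : R}
    (hb : Commute e (v * b * star v)) :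
    Commute (star v * e * v) (star v * v * b * (star v * v)) := by
  calc star v * e * v * (star v * v * b * (star v * v))
      = star v * e * (v * star v * v) * b * star v * v := by simp only [mul_assoc]
    _ = star v * (e * (v * b * star v)) * v := by rw [hv]; simp only [mul_assoc]
    _ = star v * v * b * (star v * v * star v) * e * v := by
        rw [hb.eq, star_mul_mul_star_eq_of_mul_star_mul_eq hv]; simp only [mul_assoc]
    _ = star v * v * b * (star v * v) * (star v * e * v) := by simp only [mul_assoc]

end StarRing

open Module.End in
theorem IsStarProjection.commute_of_range_mem_invtSubmodule {e a : H →L[ℂ] H}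
    (he : IsStarProjection e) (h : e.range ∈ invtSubmodule (a : H →ₗ[ℂ] H))
    (h' : e.range ∈ invtSubmodule ((star a : H →L[ℂ] H) : H →ₗ[ℂ] H)) : Commute e a :=
  he.commute_of_mul_mul_eq
    (ContinuousLinearMap.IsIdempotentElem.conj_eq_of_range_mem_invtSubmodule he.1 h)
    (ContinuousLinearMap.IsIdempotentElem.conj_eq_of_range_mem_invtSubmodule he.1 h')

namespace IsJonesProjection

variable {B : VonNeumannAlgebra H} {ξ : H} {e : H →L[ℂ] H}

theorem isStarProjection (he : IsJonesProjection B ξ e) : IsStarProjection e :=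
  ⟨he.2.1, he.1⟩

theorem apply_self (he : IsJonesProjection B ξ e) : e ξ = ξ :=
  he.2.2.2 ξ (subset_closure ⟨1, one_mem B, rfl⟩)

theorem coe_range (he : IsJonesProjection B ξ e) :
    (e.range : Set H) = closure {z : H | ∃ b ∈ B, b ξ = z} :=
  Set.ext fun z => ⟨by rintro ⟨y, rfl⟩; exact he.2.2.1 y, fun hz => ⟨z, he.2.2.2 z hz⟩⟩

theorem commute (he : IsJonesProjection B ξ e) {b : H →L[ℂ] H} (hb : b ∈ B) : Commute e b := by
  have hinv : ∀ {b}, b ∈ B → e.range ∈ Module.End.invtSubmodule (b : H →ₗ[ℂ] H) := by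
    intro b hb
    rw [Module.End.mem_invtSubmodule_iff_mapsTo, he.coe_range]
    refine Set.MapsTo.closure ?_ b.continuous
    rintro _ ⟨b', hb', rfl⟩
    exact ⟨b * b', mul_mem hb hb', rfl⟩
  exact he.isStarProjection.commute_of_range_mem_invtSubmodule (hinv hb) (hinv (star_mem hb))

end IsJonesProjection

theorem IsTracialStandardForm.eq_of_jones_mul_eq {M B : VonNeumannAlgebra H} {ξ : H}
    {e x y : H →L[ℂ] H} (hstd : IsTracialStandardForm M ξ) (he : IsJonesProjection B ξ e)
    (hx : x ∈ M) (hy : y ∈ M) (h : e * x = e * y) : x = y := by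
  have hξ : star (x - y) ξ = 0 := by
    have := congr($(congr_arg star h) ξ)
    simp only [star_mul, he.1.star_eq, mul_apply_eq_comp, he.apply_self] at this
    simp [this]
  simpa [sub_eq_zero] using hstd.separating _ (star_mem (sub_mem hx hy)) hξ

def closedSpanRange (S : Set (H →L[ℂ] H)) (x : H →L[ℂ] H) : Submodule ℂ H :=
  (Submodule.span ℂ (⋃ s ∈ S, Set.range (s * x))).topologicalClosure

instance (S : Set (H →L[ℂ] H)) (x : H →L[ℂ] H) :
    (closedSpanRange S x).HasOrthogonalProjection := by
  unfold closedSpanRange; infer_instance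

section closedSpanRange

variable {S : Set (H →L[ℂ] H)} {x : H →L[ℂ] H}

omit [CompleteSpace H] in
theorem apply_mem_closedSpanRange {s : H →L[ℂ] H} (hs : s ∈ S) (η : H) :
    (s * x) η ∈ closedSpanRange S x :=
  Submodule.le_topologicalClosure _ (Submodule.subset_span (Set.mem_biUnion hs ⟨η, rfl⟩))

omit [CompleteSpace H] in
theorem closedSpanRange_le {L : Submodule ℂ H} (hL : IsClosed (L : Set H))
    (h : ∀ s ∈ S, ∀ η, (s * x) η ∈ L) : closedSpanRange S x ≤ L := by
  refine Submodule.topologicalClosure_minimal _ (Submodule.span_le.mpr ?_) hL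
  simp only [Set.iUnion_subset_iff, Set.range_subset_iff]
  exact h

omit [CompleteSpace H] in
theorem closedSpanRange_mem_invtSubmodule {g : H →L[ℂ] H} (hg : ∀ s ∈ S, g * s ∈ S) :
    closedSpanRange S x ∈ Module.End.invtSubmodule (g : H →ₗ[ℂ] H) :=
  closedSpanRange_le ((Submodule.isClosed_topologicalClosure _).preimage g.continuous)
    fun s hs η => apply_mem_closedSpanRange (x := x) (hg s hs) η

theorem commute_starProjection_closedSpanRange {g : H →L[ℂ] H} (hg : ∀ s ∈ S, g * s ∈ S)
    (hg' : ∀ s ∈ S, star g * s ∈ S) : Commute (closedSpanRange S x).starProjection g := by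
  refine isStarProjection_starProjection.commute_of_range_mem_invtSubmodule ?_ ?_ <;>
    rw [Submodule.range_starProjection]
  exacts [closedSpanRange_mem_invtSubmodule hg, closedSpanRange_mem_invtSubmodule hg']

theorem starProjection_closedSpanRange_mul_self (hS : 1 ∈ S) :
    (closedSpanRange S x).starProjection * x = x := by
  ext η
  simpa using Submodule.starProjection_eq_self_iff.mpr (apply_mem_closedSpanRange hS η)

theorem mul_starProjection_closedSpanRange_eq_zero {y : H →L[ℂ] H}
    (h : ∀ s ∈ S, y * s * x = 0) : y * (closedSpanRange S x).starProjection = 0 := by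
  have hle : closedSpanRange S x ≤ y.ker :=
    closedSpanRange_le y.isClosed_ker fun s hs η => by simpa using congr($(h s hs) η)
  ext η
  exact hle (Submodule.starProjection_apply_mem _ η)

end closedSpanRange

section Commutant

open Pointwise VonNeumannAlgebra

variable {B C : VonNeumannAlgebra H}

theorem mul_mem_mul_of_commute (hBC : ∀ b ∈ B, ∀ c ∈ C, Commute b c) {g s : H →L[ℂ] H}
    (hg : g ∈ B ∨ g ∈ C) (hs : s ∈ (↑B * ↑C : Set (H →L[ℂ] H))) :
    g * s ∈ (↑B * ↑C : Set (H →L[ℂ] H)) := by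
  obtain ⟨b, hb, c, hc, rfl⟩ := hs
  rcases hg with hg | hg
  · exact mul_assoc g b c ▸ Set.mul_mem_mul (mul_mem hg hb) hc
  · rw [← mul_assoc, ← (hBC b hb g hg).eq, mul_assoc]
    exact Set.mul_mem_mul hb (mul_mem hg hc)

theorem commute_starProjection_closedSpanRange_mul (hBC : ∀ b ∈ B, ∀ c ∈ C, Commute b c)
    (x : H →L[ℂ] H) {g : H →L[ℂ] H} (hg : g ∈ B ∨ g ∈ C) :
    Commute (closedSpanRange (↑B * ↑C : Set (H →L[ℂ] H)) x).starProjection g :=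
  commute_starProjection_closedSpanRange (fun _ => mul_mem_mul_of_commute hBC hg)
    (fun _ => mul_mem_mul_of_commute hBC (hg.imp star_mem star_mem))

theorem starProjection_closedSpanRange_mem_commutant (hBC : ∀ b ∈ B, ∀ c ∈ C, Commute b c)
    (x : H →L[ℂ] H) :
    (closedSpanRange (↑B * ↑C : Set (H →L[ℂ] H)) x).starProjection ∈ C.commutant :=
  mem_commutant_iff.mpr fun _ hc => (commute_starProjection_closedSpanRange_mul hBC x
    (Or.inr hc)).eq.symm

theorem one_mem_mul : (1 : H →L[ℂ] H) ∈ (↑B * ↑C : Set (H →L[ℂ] H)) :=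
  one_mul (1 : H →L[ℂ] H) ▸ Set.mul_mem_mul (one_mem B) (one_mem C)

theorem exists_central_eq_mul {w q : H →L[ℂ] H} (hw : w ∈ B) (hw' : IsSelfAdjoint w)
    (hq : IsSelfAdjoint q) (h : ∀ b ∈ B, q * b * w = w * b * w) :
    ∃ z ∈ B, (∀ b ∈ B, z * b = b * z) ∧ w = z * q := by
  have hBB' : ∀ b ∈ B, ∀ c ∈ B.commutant, Commute b c :=
    fun b hb c hc => mem_commutant_iff.mp hc b hb
  set z := (closedSpanRange (↑B * ↑B.commutant : Set (H →L[ℂ] H)) w).starProjection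
  have hzB : z ∈ B :=
    commutant_commutant B ▸ starProjection_closedSpanRange_mem_commutant hBB' w
  have hzw : z * w = w := starProjection_closedSpanRange_mul_self one_mem_mul
  have hqwz : (q - w) * z = 0 := by
    refine mul_starProjection_closedSpanRange_eq_zero ?_
    rintro _ ⟨b, hb, c, hc, rfl⟩
    rw [← mul_assoc, mul_assoc _ c, ← (hBB' w hw c hc).eq, ← mul_assoc, sub_mul, sub_mul,
      h b hb, sub_self, zero_mul]
  have hzqw : z * (q - w) = 0 := by
    have hz : IsSelfAdjoint z := isSelfAdjoint_starProjection _
    simpa [star_mul, hq.star_eq, hw'.star_eq, hz.star_eq] using congr_arg star hqwz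
  refine ⟨z, hzB, fun b hb => (commute_starProjection_closedSpanRange_mul hBB' w
    (Or.inl hb)).eq, ?_⟩
  rw [← hzw, ← sub_eq_zero, ← mul_sub, ← neg_sub, mul_neg, hzqw, neg_zero]

theorem exists_inRelCommutant_eq_mul {N : VonNeumannAlgebra H} (hBN : ∀ b ∈ B, b ∈ N)
    {w p : H →L[ℂ] H} (hw : w ∈ B) (hp : IsStarProjection p) (hpN : p ∈ N) (hpw : p * w = p)
    (hwp : w * p = p) (hcomm : ∀ b ∈ B, Commute p (w * b * w)) :
    ∃ T, InRelCommutant B N T ∧ p = T * w := by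
  have hBN' : ∀ b ∈ B, ∀ c ∈ N.commutant, Commute b c :=
    fun b hb c hc => mem_commutant_iff.mp hc b (hBN b hb)
  set T := (closedSpanRange (↑B * ↑N.commutant : Set (H →L[ℂ] H)) p).starProjection
  have hT : IsSelfAdjoint T := isSelfAdjoint_starProjection _
  have hTN : T ∈ N :=
    commutant_commutant N ▸ starProjection_closedSpanRange_mem_commutant hBN' p
  have hTB : ∀ b ∈ B, Commute T b := fun b hb =>
    commute_starProjection_closedSpanRange_mul hBN' p (Or.inl hb)
  have hTp : T * p = p := starProjection_closedSpanRange_mul_self one_mem_mul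
  have hpT : p * T = p := by
    simpa [star_mul, hp.isSelfAdjoint.star_eq, hT.star_eq] using congr_arg star hTp
  have hwT : (1 - p) * w * T = 0 := by
    refine mul_starProjection_closedSpanRange_eq_zero ?_
    rintro _ ⟨b, hb, c, hc, rfl⟩
    have hcp : p * c = c * p := mem_commutant_iff.mp hc p hpN
    have hbp : (1 - p) * (w * b * w) * p = 0 := by
      rw [mul_assoc, ← (hcomm b hb).eq, ← mul_assoc, sub_mul, one_mul, hp.isIdempotentElem.eq,
        sub_self, zero_mul]
    calc (1 - p) * w * (b * c) * p = (1 - p) * w * b * (c * p) := by simp only [mul_assoc]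
      _ = (1 - p) * w * b * (w * p) * c := by rw [← hcp, hwp]; simp only [mul_assoc]
      _ = (1 - p) * (w * b * w) * p * c := by simp only [mul_assoc]
      _ = 0 := by rw [hbp, zero_mul]
  rw [sub_mul, one_mul, sub_mul, sub_eq_zero, hpw, hpT] at hwT
  exact ⟨T, ⟨hTN, fun b hb => (hTB b hb).eq.symm⟩, ((hTB w hw).eq.trans hwT).symm⟩

end Commutant

theorem isProjOp_iff {p : H →L[ℂ] H} : IsProjOp p ↔ IsStarProjection p :=
  ⟨fun h => ⟨h.2, h.1⟩, fun h => ⟨h.2, h.1⟩⟩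

theorem InRelCommutant.mul {B N : VonNeumannAlgebra H} {S T : H →L[ℂ] H}
    (hS : InRelCommutant B N S) (hT : InRelCommutant B N T) : InRelCommutant B N (S * T) :=
  ⟨mul_mem hS.1 hT.1, fun b hb => by rw [← mul_assoc, hS.2 b hb, mul_assoc, hT.2 b hb, mul_assoc]⟩

namespace IsIntertwiner

variable {M B : VonNeumannAlgebra H} {ξ : H} {e v q T : H →L[ℂ] H}

theorem mul_star_mem (hv : IsIntertwiner B M v) : v * star v ∈ B := by
  simpa [← mul_assoc, hv.2.1] using hv.2.2.1 _ hv.2.2.2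

theorem mul_eq_self_of_eq_mul (hstd : IsTracialStandardForm M ξ)
    (hBM : ∀ x ∈ B, x ∈ M) (he : IsJonesProjection B ξ e) (hv : IsIntertwiner B M v)
    (hq : q ∈ B) (hqp : IsStarProjection q)
    (hpT : star v * e * v = T * q) : v * q = v := by
  have hvp := mul_star_mul_mul_eq hv.2.1 (he.commute hv.mul_star_mem)
  have hpq : star v * e * v * q = star v * e * v := by
    rw [hpT, mul_assoc, hqp.isIdempotentElem.eq]
  refine hstd.eq_of_jones_mul_eq he (mul_mem hv.1 (hBM q hq)) hv.1 ?_
  rw [← mul_assoc, ← hvp, mul_assoc, hpq, hvp]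

theorem mul_mul_eq_of_eq_mul (hstd : IsTracialStandardForm M ξ) (hBM : ∀ x ∈ B, x ∈ M)
    (he : IsJonesProjection B ξ e) (hv : IsIntertwiner B M v) (hq : q ∈ B)
    (hT : ∀ b ∈ B, b * T = T * b) (hpT : star v * e * v = T * q) {b : H →L[ℂ] H}
    (hb : b ∈ B) : v * (b * q) = v * (q * b * (star v * v)) := by
  have ⟨hvM, hvv, hvB, hwB⟩ := hv
  have hpbq : star v * e * v * b * q = q * b * (star v * e * v) := by
    rw [hpT]
    calc T * q * b * q = q * (T * b) * q := by rw [(hT q hq).symm]; simp only [mul_assoc]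
      _ = q * b * (T * q) := by rw [← hT b hb]; simp only [mul_assoc]
  refine hstd.eq_of_jones_mul_eq he (mul_mem hvM (hBM _ (mul_mem hb hq)))
    (mul_mem hvM (hBM _ (mul_mem (mul_mem hq hb) hwB))) ?_
  calc e * (v * (b * q)) = e * v * b * q := by simp only [mul_assoc]
    _ = v * (star v * e * v * b * q) := by
        rw [← mul_star_mul_mul_eq hvv (he.commute hv.mul_star_mem)]; simp only [mul_assoc]
    _ = v * (q * b) * star v * e * v := by rw [hpbq]; simp only [mul_assoc]
    _ = e * (v * (q * b) * star v) * v := by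
        rw [← (he.commute (hvB _ (mul_mem hq hb))).eq]
    _ = e * (v * (q * b * (star v * v))) := by simp only [mul_assoc]

theorem mul_mul_star_mul_eq_of_eq_mul (hstd : IsTracialStandardForm M ξ)
    (hBM : ∀ x ∈ B, x ∈ M) (he : IsJonesProjection B ξ e) (hv : IsIntertwiner B M v)
    (hq : q ∈ B) (hqp : IsStarProjection q) (hT : ∀ b ∈ B, b * T = T * b)
    (hpT : star v * e * v = T * q) {b : H →L[ℂ] H} (hb : b ∈ B) :
    q * b * (star v * v) = star v * v * b * (star v * v) := by
  have hvq := hv.mul_eq_self_of_eq_mul hstd hBM he hq hqp hpT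
  have key : star v * v * star b * q = star v * v * star b * (star v * v) :=
    calc star v * v * star b * q = star v * (v * (star b * q)) := by simp only [mul_assoc]
      _ = star v * (v * q) * star b * (star v * v) := by
          rw [hv.mul_mul_eq_of_eq_mul hstd hBM he hq hT hpT (star_mem hb)]
          simp only [mul_assoc]
      _ = star v * v * star b * (star v * v) := by rw [hvq]
  simpa [star_mul, hqp.isSelfAdjoint.star_eq, mul_assoc] using congr_arg star key

end IsIntertwiner

theorem intertwiner_jones_projection_general
    (M B N : VonNeumannAlgebra H) (ξ : H) (e : H →L[ℂ] H)
    (hstd : IsTracialStandardForm M ξ)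
    (hBM : ∀ x ∈ B, x ∈ M)
    (he : IsJonesProjection B ξ e)
    (hN : IsBasicConstruction M e N)
    (v : H →L[ℂ] H) (hv : IsIntertwiner B M v) :
    (IsProjOp (star v * e * v) ∧ star v * e * v ∈ N ∧
      (star v * e * v) * (star v * v) = star v * e * v ∧
      (star v * v) * (star v * e * v) = star v * e * v ∧
      (∀ b ∈ B, (star v * e * v) * ((star v * v) * b * (star v * v)) =
        ((star v * v) * b * (star v * v)) * (star v * e * v))) ∧
    (∀ q ∈ B, IsProjOp q →
      ((∃ T : H →L[ℂ] H, InRelCommutant B N T ∧ star v * e * v = T * q) ↔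
        (∃ z ∈ B, (∀ b ∈ B, z * b = b * z) ∧ star v * v = z * q))) := by
  have ⟨hvM, hvv, hvB, hwB⟩ := hv
  have hve : Commute e (v * star v) := he.commute hv.mul_star_mem
  have hp := isStarProjection_star_mul_mul hvv he.isStarProjection hve
  have hpN : star v * e * v ∈ N :=
    mul_mem (mul_mem (star_mem (hN.1 v hvM)) hN.2.1) (hN.1 v hvM)
  have hpw := star_mul_mul_mul_star_mul (e := e) hvv
  have hwp := star_mul_mul_star_mul_mul hvv hve
  have hcomm : ∀ b ∈ B, Commute (star v * e * v) (star v * v * b * (star v * v)) :=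
    fun b hb => commute_star_mul_mul_of_commute_conj hvv (he.commute (hvB b hb))
  refine ⟨⟨isProjOp_iff.mpr hp, hpN, hpw, hwp, fun b hb => (hcomm b hb).eq⟩,
    fun q hq hqp => ⟨?_, ?_⟩⟩
  · rintro ⟨T, ⟨-, hT⟩, hpT⟩
    have hq' := isProjOp_iff.mp hqp
    exact exists_central_eq_mul hwB (.star_mul_self v) hq'.isSelfAdjoint
      fun b hb => hv.mul_mul_star_mul_eq_of_eq_mul hstd hBM he hq hq' hT hpT hb
  · rintro ⟨z, hzB, hz, hwz⟩
    have hBN : ∀ b ∈ B, b ∈ N := fun b hb => hN.1 b (hBM b hb)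
    obtain ⟨T, hT, hpT⟩ := exists_inRelCommutant_eq_mul hBN hwB hp hpN hpw hwp hcomm
    exact ⟨T * z, hT.mul ⟨hBN z hzB, fun b hb => (hz b hb).symm⟩, by rw [hpT, hwz, mul_assoc]⟩

/-- **Lemma 3.1.**  Let `B` be a von Neumann subalgebra of a finite von Neumann algebra
`M` and let `v ∈ GN⁽¹⁾_M(B)`.
(1) `v* e_B v` is a projection in `(B' ∩ ⟨M, e_B⟩) v*v`, i.e. it is a projection in
`⟨M, e_B⟩` commuting with `v*v B v*v` and dominated by `v*v`.
(2) For a projection `q ∈ B`, `v* e_B v` lies in `(B' ∩ ⟨M, e_B⟩) q` if and only if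
`v*v ∈ Z(B) q`. -/
theorem intertwiner_jones_projection
    [TopologicalSpace.SeparableSpace H]
    (M B N : VonNeumannAlgebra H) (ξ : H) (e : H →L[ℂ] H)
    (hstd : IsTracialStandardForm M ξ)
    (hBM : ∀ x ∈ B, x ∈ M)
    (he : IsJonesProjection B ξ e)
    (hN : IsBasicConstruction M e N)
    (v : H →L[ℂ] H) (hv : IsIntertwiner B M v) :
    (IsProjOp (star v * e * v) ∧ star v * e * v ∈ N ∧
      (star v * e * v) * (star v * v) = star v * e * v ∧
      (star v * v) * (star v * e * v) = star v * e * v ∧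
      (∀ b ∈ B, (star v * e * v) * ((star v * v) * b * (star v * v)) =
        ((star v * v) * b * (star v * v)) * (star v * e * v))) ∧
    (∀ q ∈ B, IsProjOp q →
      ((∃ T : H →L[ℂ] H, InRelCommutant B N T ∧ star v * e * v = T * q) ↔
        (∃ z ∈ B, (∀ b ∈ B, z * b = b * z) ∧ star v * v = z * q))) :=
  intertwiner_jones_projection_general M B N ξ e hstd hBM he hN v hv
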